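/- For every maximal tubing J of the cycle C_n, Cut(J) is a maximal tubing of the path P_n. Moreover the map cut_J on tubes is injective, so |Cut(J)| = |J| = n. -/

import Mathlib

open Finset

section TubingDefs

variable {n : ℕ}

/-- A tube of a graph: a nonempty vertex subset inducing a connected subgraph. -/
def IsTube (G : SimpleGraph (Fin n)) (X : Finset (Fin n)) : Prop :=
  X.Nonempty ∧ (G.induce (X : Set (Fin n))).Connected

/-- Tubes are compatible if nested or with disconnected union. -/
def TubeCompatible (G : SimpleGraph (Fin n)) (X Y : Finset (Fin n)) : Prop :=
  X ⊆ Y ∨ Y ⊆ X ∨ ¬ IsTube G (X ∪ Y)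

def IsTubing (G : SimpleGraph (Fin n)) (T : Finset (Finset (Fin n))) : Prop :=
  (∀ X ∈ T, IsTube G X) ∧ ∀ X ∈ T, ∀ Y ∈ T, TubeCompatible G X Y

def IsMaxTubing (G : SimpleGraph (Fin n)) (T : Finset (Finset (Fin n))) : Prop :=
  IsTubing G T ∧ ∀ T', IsTubing G T' → T ⊆ T' → T' = T

/-- The smallest tube of `T` containing `x`: the intersection of all tubes of `T`
containing `x`. -/
def tubingDown (T : Finset (Finset (Fin n))) (x : Fin n) : Finset (Fin n) :=
  Finset.univ.filter (fun y => ∀ X ∈ T, x ∈ X → y ∈ X)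

/-- The G-tree order of a tubing: `x ≤_T y` iff `x` lies in the smallest tube containing `y`. -/
def treeLE (T : Finset (Finset (Fin n))) (x y : Fin n) : Prop :=
  x ∈ tubingDown T y

/-- `y` covers `x` in the G-tree order of `T`. -/
def TreeCovBy (T : Finset (Finset (Fin n))) (x y : Fin n) : Prop :=
  treeLE T x y ∧ x ≠ y ∧ ∀ z, treeLE T x z → treeLE T z y → z = x ∨ z = y

/-- Flip cover relation on maximal tubings: exchange exactly one tube, with the
top (least-nested) element of the exchanged tube increasing. -/
def FlipCover (G : SimpleGraph (Fin n)) (T J : Finset (Finset (Fin n))) : Prop :=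
  IsMaxTubing G T ∧ IsMaxTubing G J ∧
  ∃ X Y, X ∈ T ∧ Y ∈ J ∧ X ≠ Y ∧ T.erase X = J.erase Y ∧
    ∃ x y : Fin n, tubingDown T x = X ∧ tubingDown J y = Y ∧ x < y

/-- The order of the poset of maximal tubings, generated by flip covers. -/
def MTubLE (G : SimpleGraph (Fin n)) :
    Finset (Finset (Fin n)) → Finset (Finset (Fin n)) → Prop :=
  Relation.ReflTransGen (FlipCover G)

/-- Inversions: pairs `i < j` with `j <_T i` in the G-tree. -/
def invSet (T : Finset (Finset (Fin n))) : Set (Fin n × Fin n) :=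
  {p | p.1 < p.2 ∧ treeLE T p.2 p.1}

/-- Coinversions: pairs `i < j` with `i <_T j` in the G-tree. -/
def coinvSet (T : Finset (Finset (Fin n))) : Set (Fin n × Fin n) :=
  {p | p.1 < p.2 ∧ treeLE T p.1 p.2}

/-- Incomparable pairs `i < j` of the G-tree. -/
def incSet (T : Finset (Finset (Fin n))) : Set (Fin n × Fin n) :=
  {p | p.1 < p.2 ∧ ¬ treeLE T p.1 p.2 ∧ ¬ treeLE T p.2 p.1}

/-- The cut of the tube `J↓(x)`, where `m` is the root of the G-tree of `J`. -/
def cutTube (J : Finset (Finset (Fin n))) (m x : Fin n) : Finset (Fin n) :=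
  if x = m then tubingDown J x
  else if x < m then (tubingDown J x).filter (fun y => y < m)
  else (tubingDown J x).filter (fun y => m < y)

/-- The Cut map on maximal tubings of the cycle. -/
def CutTubing (J : Finset (Finset (Fin n))) (m : Fin n) : Finset (Finset (Fin n)) :=
  Finset.image (cutTube J m) Finset.univ

/-- Inversions of a word: pairs `i < j` such that `j` appears before `i`. -/
def listInvSet (w : List (Fin n)) : Set (Fin n × Fin n) :=
  {p | p.1 < p.2 ∧ p.1 ∈ w ∧ p.2 ∈ w ∧ w.idxOf p.2 < w.idxOf p.1}

end TubingDefs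

/-- The path graph `1 - 2 - ⋯ - n`. -/
def pathGraph (n : ℕ) : SimpleGraph (Fin n) :=
  SimpleGraph.fromRel (fun a b => (a : ℕ) + 1 = (b : ℕ))

/-- The cycle graph `1 - 2 - ⋯ - n - 1`. -/
def cycleGraph (n : ℕ) : SimpleGraph (Fin n) :=
  SimpleGraph.fromRel (fun a b => (a : ℕ) + 1 = (b : ℕ) ∨ ((a : ℕ) = 0 ∧ (b : ℕ) = n - 1))

/-!
In a maximal tubing `J` containing `[n]`, every tube is `J↓(x)` for exactly one `x`: two tops
`x ≠ y` of the same tube would leave room for the largest tube through `x` inside `J↓(y) \ {y}`.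
Hence `|J| = n`, and as no tubing has more than `n` tubes, a tubing of `P_n` with `n` tubes is
maximal. Tubes of `P_n` are the nonempty intervals, while a tube of `C_n` avoiding the root `m`
meets each side of `m` in an interval, so each cut is a tube of `P_n`; the cuts are distinct because
`x ∈ cut_J(J↓(x)) ⊆ J↓(x)`.
-/

variable {n : ℕ}

section Tubes

variable {G H : SimpleGraph (Fin n)} {X Y S : Finset (Fin n)}

theorem IsTube.mono (hGH : G ≤ H) (h : IsTube G X) : IsTube H X :=
  ⟨h.1, h.2.mono (SimpleGraph.comap_monotone _ hGH)⟩

theorem IsTube.exists_boundary_adj (hS : IsTube G S) (p : Fin n → Prop) {u v : Fin n}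
    (hu : u ∈ S) (hv : v ∈ S) (hpu : p u) (hpv : ¬ p v) :
    ∃ a ∈ S, ∃ b ∈ S, G.Adj a b ∧ p a ∧ ¬ p b := by
  obtain ⟨w⟩ := hS.2.preconnected ⟨u, hu⟩ ⟨v, hv⟩
  obtain ⟨d, -, hd, hd'⟩ := w.exists_boundary_dart {z | p z.1} hpu hpv
  exact ⟨d.fst, d.fst.2, d.snd, d.snd.2, d.adj, hd, hd'⟩

theorem IsTube.exists_link_of_union (h : IsTube G (X ∪ Y)) (hX : X.Nonempty)
    (hY : Y.Nonempty) : ∃ a ∈ X, ∃ b ∈ Y, a = b ∨ G.Adj a b := by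
  obtain ⟨u, hu⟩ := hX
  by_cases hYX : Y ⊆ X
  · obtain ⟨b, hb⟩ := hY
    exact ⟨b, hYX hb, b, hb, Or.inl rfl⟩
  obtain ⟨v, hv, hvX⟩ := Finset.not_subset.mp hYX
  obtain ⟨a, -, b, hb, hab, ha, hbX⟩ :=
    h.exists_boundary_adj (· ∈ X) (mem_union_left _ hu) (mem_union_right _ hv) hu hvX
  exact ⟨a, ha, b, (mem_union.mp hb).resolve_left hbX, Or.inr hab⟩

theorem isTube_union_iff (hX : IsTube G X) (hY : IsTube G Y) :
    IsTube G (X ∪ Y) ↔ ∃ a ∈ X, ∃ b ∈ Y, a = b ∨ G.Adj a b := by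
  refine ⟨fun h => h.exists_link_of_union hX.1 hY.1, ?_⟩
  rintro ⟨a, ha, b, hb, rfl | hab⟩
  · refine ⟨hX.1.mono subset_union_left, ?_⟩
    rw [coe_union]
    exact SimpleGraph.induce_union_connected hX.2.preconnected hY.2.preconnected ⟨a, ha, hb⟩
  · refine ⟨hX.1.mono subset_union_left, ?_⟩
    rw [coe_union]
    exact SimpleGraph.connected_induce_union hX.2.preconnected hY.2.preconnected ha hb hab

theorem tubeCompatible_comm : TubeCompatible G X Y ↔ TubeCompatible G Y X := by
  unfold TubeCompatible
  rw [union_comm]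
  tauto

theorem TubeCompatible.subset_or_subset (h : TubeCompatible G X Y) (hX : IsTube G X)
    (hY : IsTube G Y) {a : Fin n} (haX : a ∈ X) (haY : a ∈ Y) : X ⊆ Y ∨ Y ⊆ X :=
  h.imp_right (Or.resolve_right · (not_not.mpr ((isTube_union_iff hX hY).mpr
    ⟨a, haX, a, haY, Or.inl rfl⟩)))

theorem TubeCompatible.filter (hGH : G ≤ H) (hX : IsTube H X) (hY : IsTube H Y)
    (h : TubeCompatible H X Y) (p : Fin n → Prop) [DecidablePred p] :
    TubeCompatible G (X.filter p) (Y.filter p) := by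
  rcases h with h | h | h
  · exact Or.inl (filter_subset_filter p h)
  · exact Or.inr (Or.inl (filter_subset_filter p h))
  rcases (X.filter p).eq_empty_or_nonempty with hXp | hXp
  · exact Or.inl (hXp ▸ empty_subset _)
  rcases (Y.filter p).eq_empty_or_nonempty with hYp | hYp
  · exact Or.inr (Or.inl (hYp ▸ empty_subset _))
  refine Or.inr (Or.inr fun hU => h ((isTube_union_iff hX hY).mpr ?_))
  obtain ⟨a, ha, b, hb, hab⟩ := hU.exists_link_of_union hXp hYp
  exact ⟨a, filter_subset p X ha, b, filter_subset p Y hb, hab.imp_right (hGH ·)⟩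

theorem isTube_singleton (x : Fin n) : IsTube G {x} := by
  refine ⟨singleton_nonempty x, (SimpleGraph.connected_iff _).mpr ⟨?_, ⟨⟨x, by simp⟩⟩⟩⟩
  rw [coe_singleton]
  exact .of_subsingleton

theorem exists_maximal_subtube {E : Finset (Fin n)} {x : Fin n} (hx : x ∈ E) :
    ∃ A, IsTube G A ∧ x ∈ A ∧ A ⊆ E ∧
      ∀ Z, IsTube G Z → Z ⊆ E → (∃ a ∈ A, ∃ b ∈ Z, a = b ∨ G.Adj a b) → Z ⊆ A := by
  classical
  obtain ⟨A, hA, hmax⟩ := (E.powerset.filter fun A => IsTube G A ∧ x ∈ A).exists_max_image card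
    ⟨{x}, mem_filter.mpr ⟨mem_powerset.mpr (singleton_subset_iff.mpr hx), isTube_singleton x,
      mem_singleton_self x⟩⟩
  obtain ⟨hAE, hA, hxA⟩ := by simpa only [mem_filter, mem_powerset] using hA
  refine ⟨A, hA, hxA, hAE, fun Z hZ hZE hlink => ?_⟩
  have hAZ : A ∪ Z ∈ E.powerset.filter fun A => IsTube G A ∧ x ∈ A :=
    mem_filter.mpr ⟨mem_powerset.mpr (union_subset hAE hZE), (isTube_union_iff hA hZ).mpr hlink,
      mem_union_left Z hxA⟩
  exact union_subset_iff.mp (eq_of_subset_of_card_le subset_union_left (hmax _ hAZ)).ge |>.2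

end Tubes

section TubingDown

variable {G : SimpleGraph (Fin n)} {T : Finset (Finset (Fin n))} {X : Finset (Fin n)}
  {x y : Fin n}

theorem mem_tubingDown_self : x ∈ tubingDown T x := by
  simp [tubingDown]

theorem tubingDown_subset (hX : X ∈ T) (hx : x ∈ X) : tubingDown T x ⊆ X :=
  fun _ hy => (mem_filter.mp hy).2 X hX hx

theorem tubingDown_mem (hT : IsTubing G T) (hX : X ∈ T) (hx : x ∈ X) :
    tubingDown T x ∈ T := by
  obtain ⟨X₀, hX₀, hmin⟩ := (T.filter (x ∈ ·)).exists_min_image card ⟨X, mem_filter.mpr ⟨hX, hx⟩⟩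
  rw [mem_filter] at hX₀
  suffices tubingDown T x = X₀ from this ▸ hX₀.1
  refine (tubingDown_subset hX₀.1 hX₀.2).antisymm fun y hy => mem_filter.mpr ⟨mem_univ y, ?_⟩
  intro Y hY hxY
  rcases (hT.2 X₀ hX₀.1 Y hY).subset_or_subset (hT.1 _ hX₀.1) (hT.1 _ hY) hX₀.2 hxY with h | h
  · exact h hy
  · rw [eq_of_subset_of_card_le h (hmin Y (mem_filter.mpr ⟨hY, hxY⟩))]
    exact hy

/-- Take `x ∈ X` with `T↓(x)` of maximal size: if `T↓(x) ⊊ X`, an edge of `X` leaving `T↓(x)`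
ends at a `y` with `T↓(x) ⊊ T↓(y)`. -/
theorem exists_tubingDown_eq (hT : IsTubing G T) (hX : X ∈ T) : ∃ x ∈ X, tubingDown T x = X := by
  obtain ⟨x, hxX, hmax⟩ := X.exists_max_image (fun x => (tubingDown T x).card) (hT.1 X hX).1
  refine ⟨x, hxX, (tubingDown_subset hX hxX).antisymm fun v hvX => ?_⟩
  by_contra hv
  obtain ⟨a, -, b, hbX, hab, ha, hb⟩ :=
    (hT.1 X hX).exists_boundary_adj (· ∈ tubingDown T x) hxX hvX mem_tubingDown_self hv
  have hxT := tubingDown_mem hT hX hxX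
  have hbT := tubingDown_mem hT hX hbX (x := b)
  rcases hT.2 _ hxT _ hbT with h | h | h
  · exact hb (eq_of_subset_of_card_le h (hmax b hbX) ▸ mem_tubingDown_self)
  · exact hb (h mem_tubingDown_self)
  · exact h ((isTube_union_iff (hT.1 _ hxT) (hT.1 _ hbT)).mpr
      ⟨a, ha, b, mem_tubingDown_self, Or.inr hab⟩)

theorem subset_image_tubingDown (hT : IsTubing G T) : T ⊆ univ.image (tubingDown T) := by
  intro X hX
  obtain ⟨x, -, hx⟩ := exists_tubingDown_eq hT hX
  exact mem_image.mpr ⟨x, mem_univ x, hx⟩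

theorem card_le_of_isTubing (hT : IsTubing G T) : T.card ≤ n :=
  (card_le_card (subset_image_tubingDown hT)).trans (card_image_le.trans (by simp))

end TubingDown

section MaxTubing

variable {G : SimpleGraph (Fin n)} {Y : Finset (Fin n)}

theorem mem_of_isMaxTubing {J : Finset (Finset (Fin n))} (hJ : IsMaxTubing G J)
    (hY : IsTube G Y) (hcompat : ∀ X ∈ J, TubeCompatible G Y X) : Y ∈ J := by
  have hins : IsTubing G (insert Y J) := by
    refine ⟨fun X hX => ?_, fun X hX Z hZ => ?_⟩
    · rcases mem_insert.mp hX with rfl | hX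
      exacts [hY, hJ.1.1 X hX]
    · rcases mem_insert.mp hX with hXY | hXJ <;> rcases mem_insert.mp hZ with hZY | hZJ
      · exact Or.inl (hXY.trans hZY.symm).subset
      · exact hXY ▸ hcompat Z hZJ
      · exact hZY ▸ tubeCompatible_comm.mp (hcompat X hXJ)
      · exact hJ.1.2 X hXJ Z hZJ
  rw [← hJ.2 _ hins (subset_insert Y J)]
  exact mem_insert_self Y J

theorem isMaxTubing_of_card_eq {T : Finset (Finset (Fin n))} (hT : IsTubing G T)
    (hcard : T.card = n) : IsMaxTubing G T :=
  ⟨hT, fun _ hT' hsub => (eq_of_subset_of_card_le hsub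
    (hcard.symm ▸ card_le_of_isTubing hT')).symm⟩

/-- A tube of `T` strictly below `T↓(y)` avoids `y`, so it lies inside `A` or does not touch it. -/
theorem tubeCompatible_of_maximal_subtube {T : Finset (Finset (Fin n))} (hT : IsTubing G T)
    {y : Fin n} (hyT : tubingDown T y ∈ T) {A : Finset (Fin n)} (hA : IsTube G A)
    (hAy : A ⊆ (tubingDown T y).erase y)
    (hmax : ∀ Z, IsTube G Z → Z ⊆ (tubingDown T y).erase y →
      (∃ a ∈ A, ∃ b ∈ Z, a = b ∨ G.Adj a b) → Z ⊆ A)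
    {Z : Finset (Fin n)} (hZT : Z ∈ T) : TubeCompatible G A Z := by
  have hAX : A ⊆ tubingDown T y := hAy.trans (erase_subset y _)
  have hZ := hT.1 Z hZT
  by_cases hyZ : y ∈ Z
  · exact Or.inl (hAX.trans (tubingDown_subset hZT hyZ))
  rcases hT.2 _ hyT Z hZT with hXZ | hZX | hXZ
  · exact Or.inl (hAX.trans hXZ)
  · by_cases hlink : ∃ a ∈ A, ∃ b ∈ Z, a = b ∨ G.Adj a b
    · exact Or.inr (Or.inl (hmax Z hZ (fun z hz => mem_erase.mpr ⟨by rintro rfl; exact hyZ hz,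
        hZX hz⟩) hlink))
    · exact Or.inr (Or.inr (mt (isTube_union_iff hA hZ).mp hlink))
  · refine Or.inr (Or.inr fun hAZ => hXZ ((isTube_union_iff (hT.1 _ hyT) hZ).mpr ?_))
    obtain ⟨a, ha, b, hb, hab⟩ := (isTube_union_iff hA hZ).mp hAZ
    exact ⟨a, hAX ha, b, hb, hab⟩

theorem eq_of_tubingDown_eq {J : Finset (Finset (Fin n))} (hJ : IsMaxTubing G J) {x y : Fin n}
    (hxJ : tubingDown J x ∈ J) (h : tubingDown J x = tubingDown J y) : x = y := by
  by_contra hxy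
  obtain ⟨A, hA, hxA, hAy, hmax⟩ :=
    exists_maximal_subtube (G := G) (mem_erase.mpr ⟨hxy, h ▸ mem_tubingDown_self⟩)
  have hAJ : A ∈ J := mem_of_isMaxTubing hJ hA fun Z hZ =>
    tubeCompatible_of_maximal_subtube hJ.1 (h ▸ hxJ) hA hAy hmax hZ
  have hyA : y ∈ A := tubingDown_subset hAJ hxA (h ▸ mem_tubingDown_self)
  exact (mem_erase.mp (hAy hyA)).1 rfl

theorem tubingDown_injective {J : Finset (Finset (Fin n))} (hJ : IsMaxTubing G J)
    (huniv : univ ∈ J) : Function.Injective (tubingDown J) :=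
  fun x _ h => eq_of_tubingDown_eq hJ (tubingDown_mem hJ.1 huniv (mem_univ x)) h

theorem card_eq_of_isMaxTubing {J : Finset (Finset (Fin n))} (hJ : IsMaxTubing G J)
    (huniv : univ ∈ J) : J.card = n := by
  have hJ_eq : J = univ.image (tubingDown J) :=
    (subset_image_tubingDown hJ.1).antisymm fun X hX => by
      obtain ⟨x, -, rfl⟩ := mem_image.mp hX
      exact tubingDown_mem hJ.1 huniv (mem_univ x)
  rw [hJ_eq, card_image_of_injective _ (tubingDown_injective hJ huniv), card_univ,
    Fintype.card_fin]

end MaxTubing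

section PathCycle

variable {S : Finset (Fin n)}

theorem pathGraph_adj {a b : Fin n} :
    (pathGraph n).Adj a b ↔ (a : ℕ) + 1 = b ∨ (b : ℕ) + 1 = a := by
  rw [pathGraph, SimpleGraph.fromRel_adj, Ne, Fin.ext_iff]
  omega

theorem cycleGraph_adj {a b : Fin n} : (cycleGraph n).Adj a b ↔ (a : ℕ) ≠ b ∧
    ((a : ℕ) + 1 = b ∨ (b : ℕ) + 1 = a ∨ ((a : ℕ) = 0 ∧ (b : ℕ) = n - 1) ∨
      ((b : ℕ) = 0 ∧ (a : ℕ) = n - 1)) := by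
  rw [cycleGraph, SimpleGraph.fromRel_adj, Ne, Fin.ext_iff]
  omega

theorem pathGraph_le_cycleGraph : pathGraph n ≤ cycleGraph n := fun a b h => by
  rw [pathGraph_adj] at h
  rw [cycleGraph_adj]
  omega

theorem isTube_pathGraph_iff :
    IsTube (pathGraph n) S ↔ S.Nonempty ∧ (S : Set (Fin n)).OrdConnected := by
  refine ⟨fun h => ⟨h.1, ⟨fun u hu v hv w ⟨huw, hwv⟩ => ?_⟩⟩, fun ⟨hne, hS⟩ => ⟨hne, ?_⟩⟩
  · by_contra hw
    have hu' : u < w := huw.lt_of_ne (by rintro rfl; exact hw hu)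
    obtain ⟨a, -, b, hb, hab, ha, hbw⟩ := h.exists_boundary_adj (· < w) hu hv hu' hwv.not_gt
    have : b ≠ w := by rintro rfl; exact hw hb
    rw [pathGraph_adj] at hab
    simp only [not_lt, Fin.lt_def, Ne, Fin.ext_iff] at ha hbw this
    omega
  · have hreach : ∀ k : ℕ, ∀ u v (hu : u ∈ S) (hv : v ∈ S), (v : ℕ) = u + k →
        ((pathGraph n).induce (S : Set (Fin n))).Reachable ⟨u, hu⟩ ⟨v, hv⟩ := by
      intro k
      induction k with
      | zero => intro u v hu hv huv; obtain rfl := Fin.ext huv; rfl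
      | succ k ih =>
        intro u v hu hv huv
        have hv' : (⟨u + k, by omega⟩ : Fin n) ∈ S :=
          hS.out hu hv ⟨Fin.le_def.mpr (by simp), Fin.le_def.mpr (by simp; omega)⟩
        exact (ih u _ hu hv' rfl).trans
          (SimpleGraph.Adj.reachable (pathGraph_adj.mpr (Or.inl (by simp; omega))))
    have : Nonempty (S : Set (Fin n)) := hne.coe_sort
    refine (SimpleGraph.connected_iff _).mpr ⟨fun ⟨u, hu⟩ ⟨v, hv⟩ => ?_, this⟩
    rcases le_total u v with huv | hvu
    · exact hreach (v - u : ℕ) u v hu hv (by rw [Fin.le_def] at huv; omega)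
    · exact (hreach (u - v : ℕ) v u hv hu (by rw [Fin.le_def] at hvu; omega)).symm

theorem isTube_univ_pathGraph (hn : 0 < n) : IsTube (pathGraph n) univ :=
  isTube_pathGraph_iff.mpr ⟨⟨⟨0, hn⟩, mem_univ _⟩, by rw [coe_univ]; exact Set.ordConnected_univ⟩

theorem not_isTube_pathGraph_union {A B : Finset (Fin n)} {u v m : Fin n} (hu : u ∈ A)
    (hv : v ∈ B) (hum : u < m) (hmv : m < v) (hmA : m ∉ A) (hmB : m ∉ B) :
    ¬ IsTube (pathGraph n) (A ∪ B) := fun h => by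
  have := (isTube_pathGraph_iff.mp h).2.out (mem_union_left B hu) (mem_union_right A hv)
    ⟨hum.le, hmv.le⟩
  simp only [mem_coe, mem_union] at this
  tauto

theorem IsTube.mem_Ioo_of_cycleGraph (hS : IsTube (cycleGraph n) S) {a b u v : Fin n}
    (ha : a ∉ S) (hb : b ∉ S) (hu : u ∈ S) (hv : v ∈ S) (huab : u ∈ Set.Ioo a b) :
    v ∈ Set.Ioo a b := by
  by_contra hvab
  obtain ⟨c, -, d, hd, hcd, hc, hd'⟩ := hS.exists_boundary_adj (· ∈ Set.Ioo a b) hu hv huab hvab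
  have hda : d ≠ a := by rintro rfl; exact ha hd
  have hdb : d ≠ b := by rintro rfl; exact hb hd
  rw [cycleGraph_adj] at hcd
  simp only [Set.mem_Ioo, Fin.lt_def, Ne, Fin.ext_iff] at hc hd' hda hdb
  have := d.isLt
  omega

theorem isTube_pathGraph_filter_lt (hS : IsTube (cycleGraph n) S) {m x : Fin n} (hm : m ∉ S)
    (hx : x ∈ S) (hxm : x < m) : IsTube (pathGraph n) (S.filter (· < m)) := by
  refine isTube_pathGraph_iff.mpr ⟨⟨x, mem_filter.mpr ⟨hx, hxm⟩⟩, ⟨fun u hu v hv w hw => ?_⟩⟩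
  simp only [mem_coe, mem_filter] at hu hv ⊢
  refine ⟨?_, hw.2.trans_lt hv.2⟩
  by_contra hwS
  have hwv : w < v := hw.2.lt_of_ne (by rintro rfl; exact hwS hv.1)
  exact (hS.mem_Ioo_of_cycleGraph hwS hm hv.1 hu.1 ⟨hwv, hv.2⟩).1.not_ge hw.1

theorem isTube_pathGraph_filter_gt (hS : IsTube (cycleGraph n) S) {m x : Fin n} (hm : m ∉ S)
    (hx : x ∈ S) (hmx : m < x) : IsTube (pathGraph n) (S.filter (m < ·)) := by
  refine isTube_pathGraph_iff.mpr ⟨⟨x, mem_filter.mpr ⟨hx, hmx⟩⟩, ⟨fun u hu v hv w hw => ?_⟩⟩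
  simp only [mem_coe, mem_filter] at hu hv ⊢
  refine ⟨?_, hu.2.trans_le hw.1⟩
  by_contra hwS
  have huw : u < w := hw.1.lt_of_ne (by rintro rfl; exact hwS hu.1)
  exact (hS.mem_Ioo_of_cycleGraph hm hwS hu.1 hv.1 ⟨hu.2, huw⟩).2.not_ge hw.2

end PathCycle

section Cut

variable {J : Finset (Finset (Fin n))} {m x y : Fin n}

theorem cutTube_root : cutTube J m m = tubingDown J m := if_pos rfl

theorem cutTube_of_lt (h : x < m) : cutTube J m x = (tubingDown J x).filter (· < m) := by
  rw [cutTube, if_neg h.ne, if_pos h]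

theorem cutTube_of_gt (h : m < x) : cutTube J m x = (tubingDown J x).filter (m < ·) := by
  rw [cutTube, if_neg h.ne', if_neg h.not_gt]

theorem mem_cutTube_self : x ∈ cutTube J m x := by
  rcases lt_trichotomy x m with h | rfl | h
  · exact cutTube_of_lt h ▸ mem_filter.mpr ⟨mem_tubingDown_self, h⟩
  · exact cutTube_root ▸ mem_tubingDown_self
  · exact cutTube_of_gt h ▸ mem_filter.mpr ⟨mem_tubingDown_self, h⟩

theorem cutTube_subset_tubingDown : cutTube J m x ⊆ tubingDown J x := by
  unfold cutTube
  split_ifs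
  exacts [subset_rfl, filter_subset _ _, filter_subset _ _]

theorem tubingDown_eq_of_cutTube_eq (hx : tubingDown J x ∈ J) (hy : tubingDown J y ∈ J)
    (h : cutTube J m x = cutTube J m y) : tubingDown J x = tubingDown J y :=
  (tubingDown_subset hy (cutTube_subset_tubingDown (h ▸ mem_cutTube_self))).antisymm
    (tubingDown_subset hx (cutTube_subset_tubingDown (h.symm ▸ mem_cutTube_self)))

theorem root_not_mem_tubingDown {G : SimpleGraph (Fin n)} (hJ : IsMaxTubing G J)
    (huniv : univ ∈ J) (hm : tubingDown J m = univ) (hx : x ≠ m) : m ∉ tubingDown J x :=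
  fun hmx => hx (tubingDown_injective hJ huniv ((hm ▸ subset_univ _).antisymm
    (tubingDown_subset (tubingDown_mem hJ.1 huniv (mem_univ x)) hmx)))

theorem isTube_cutTube (hJ : IsMaxTubing (cycleGraph n) J) (huniv : univ ∈ J)
    (hm : tubingDown J m = univ) (x : Fin n) : IsTube (pathGraph n) (cutTube J m x) := by
  have hxJ := hJ.1.1 _ (tubingDown_mem hJ.1 huniv (mem_univ x))
  rcases lt_trichotomy x m with h | rfl | h
  · rw [cutTube_of_lt h]
    exact isTube_pathGraph_filter_lt hxJ (root_not_mem_tubingDown hJ huniv hm h.ne)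
      mem_tubingDown_self h
  · rw [cutTube_root, hm]
    exact isTube_univ_pathGraph x.pos
  · rw [cutTube_of_gt h]
    exact isTube_pathGraph_filter_gt hxJ (root_not_mem_tubingDown hJ huniv hm h.ne')
      mem_tubingDown_self h

/-- Cuts on the same side of `m` inherit compatibility from the tubes of `J`; cuts on opposite
sides cannot form an interval, since neither contains `m`. -/
theorem cutTube_compatible (hJ : IsMaxTubing (cycleGraph n) J) (huniv : univ ∈ J)
    (hm : tubingDown J m = univ) (x y : Fin n) :
    TubeCompatible (pathGraph n) (cutTube J m x) (cutTube J m y) := by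
  have hdown (z : Fin n) := tubingDown_mem hJ.1 huniv (mem_univ z)
  have hcompat := hJ.1.2 _ (hdown x) _ (hdown y)
  have hroot (z : Fin n) (hz : z ≠ m) : m ∉ cutTube J m z :=
    fun h => root_not_mem_tubingDown hJ huniv hm hz (cutTube_subset_tubingDown h)
  rcases lt_trichotomy x m with hx | rfl | hx
  · rcases lt_trichotomy y m with hy | rfl | hy
    · rw [cutTube_of_lt hx, cutTube_of_lt hy]
      exact hcompat.filter pathGraph_le_cycleGraph (hJ.1.1 _ (hdown x)) (hJ.1.1 _ (hdown y)) _
    · exact Or.inl (cutTube_root ▸ hm ▸ subset_univ _)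
    · exact Or.inr (Or.inr (not_isTube_pathGraph_union mem_cutTube_self mem_cutTube_self hx hy
        (hroot x hx.ne) (hroot y hy.ne')))
  · exact Or.inr (Or.inl (cutTube_root ▸ hm ▸ subset_univ _))
  · rcases lt_trichotomy y m with hy | rfl | hy
    · rw [TubeCompatible, union_comm]
      exact Or.inr (Or.inr (not_isTube_pathGraph_union mem_cutTube_self mem_cutTube_self hy hx
        (hroot y hy.ne) (hroot x hx.ne')))
    · exact Or.inl (cutTube_root ▸ hm ▸ subset_univ _)
    · rw [cutTube_of_gt hx, cutTube_of_gt hy]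
      exact hcompat.filter pathGraph_le_cycleGraph (hJ.1.1 _ (hdown x)) (hJ.1.1 _ (hdown y)) _

theorem isTubing_cutTubing (hJ : IsMaxTubing (cycleGraph n) J) (huniv : univ ∈ J)
    (hm : tubingDown J m = univ) : IsTubing (pathGraph n) (CutTubing J m) := by
  refine ⟨fun X hX => ?_, fun X hX Y hY => ?_⟩
  · obtain ⟨x, -, rfl⟩ := mem_image.mp hX
    exact isTube_cutTube hJ huniv hm x
  · obtain ⟨x, -, rfl⟩ := mem_image.mp hX
    obtain ⟨y, -, rfl⟩ := mem_image.mp hY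
    exact cutTube_compatible hJ huniv hm x y

end Cut

/-- `Cut(J)` is a maximal tubing of the path; `cut_J` is injective on tubes, so
`|Cut(J)| = |J| = n`. -/
theorem cut_is_maxTubing (n : ℕ) (J : Finset (Finset (Fin n))) (m : Fin n)
    (hJ : IsMaxTubing (cycleGraph n) J) (hm : tubingDown J m = Finset.univ) :
    IsMaxTubing (pathGraph n) (CutTubing J m) ∧
    (∀ x y : Fin n, cutTube J m x = cutTube J m y → tubingDown J x = tubingDown J y) ∧
    (CutTubing J m).card = n ∧ J.card = n := by
  have huniv : univ ∈ J := mem_of_isMaxTubing hJ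
    ((isTube_univ_pathGraph m.pos).mono pathGraph_le_cycleGraph)
    fun X _ => Or.inr (Or.inl (subset_univ X))
  have hdown (x : Fin n) : tubingDown J x ∈ J := tubingDown_mem hJ.1 huniv (mem_univ x)
  have hcut (x y : Fin n) (h : cutTube J m x = cutTube J m y) : tubingDown J x = tubingDown J y :=
    tubingDown_eq_of_cutTube_eq (hdown x) (hdown y) h
  have hcard : (CutTubing J m).card = n := by
    rw [CutTubing, card_image_of_injective _ fun x y h =>
      tubingDown_injective hJ huniv (hcut x y h), card_univ, Fintype.card_fin]
  exact ⟨isMaxTubing_of_card_eq (isTubing_cutTubing hJ huniv hm) hcard, hcut, hcard,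
    card_eq_of_isMaxTubing hJ huniv⟩
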